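/- In the critical regime p/(1-r) = 3/4, the position of the ERWS satisfies S_n / n → 0 almost surely. -/

import Mathlib

open MeasureTheory Filter Real Topology

noncomputable section

/-- The elephant random walk with stops (ERWS): a sequence of steps `X n` (for `n ≥ 1`),
adapted to a filtration `F`, with values in `{-1, 0, 1}`, prescribed first-step law and
prescribed conditional first and second moments of the steps. -/
structure ERWS {Ω : Type*} [m0 : MeasurableSpace Ω] (μ : Measure Ω) (p q s : ℝ) where
  X : ℕ → Ω → ℝ
  F : MeasureTheory.Filtration ℕ m0
  adapted : ∀ n, 1 ≤ n → StronglyMeasurable[F n] (X n)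
  val_mem : ∀ n, 1 ≤ n → ∀ ω, X n ω = -1 ∨ X n ω = 0 ∨ X n ω = 1
  init_one : μ {ω | X 1 ω = 1} = ENNReal.ofReal s
  init_neg : μ {ω | X 1 ω = -1} = ENNReal.ofReal (1 - s)
  cond_one : ∀ n, 1 ≤ n →
    μ[X (n + 1)|F n] =ᵐ[μ] fun ω => (p - q) * (∑ k ∈ Finset.Icc 1 n, X k ω) / n
  cond_two : ∀ n, 1 ≤ n →
    μ[fun ω => (X (n + 1) ω) ^ 2|F n] =ᵐ[μ]
      fun ω => (p + q) * (∑ k ∈ Finset.Icc 1 n, (X k ω) ^ 2) / n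

namespace ERWS

variable {Ω : Type*} [m0 : MeasurableSpace Ω] {μ : Measure Ω} {p q s : ℝ}

/-- The position `S n = X 1 + ⋯ + X n` of the ERWS. -/
def S (e : ERWS μ p q s) (n : ℕ) (ω : Ω) : ℝ := ∑ k ∈ Finset.Icc 1 n, e.X k ω

/-- The number of nonzero steps `Σ n = X 1 ² + ⋯ + X n ²` of the ERWS. -/
def Sig (e : ERWS μ p q s) (n : ℕ) (ω : Ω) : ℝ := ∑ k ∈ Finset.Icc 1 n, (e.X k ω) ^ 2

end ERWS

/-!
The critical condition says `2 (p - q) = 1 - r`. Conditioning on `F n`, the cross term gives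
`E S_{n+1}² = (1 + (1 - r) / n) E S_n² + E X_{n+1}²`, so `E S_n² ≤ n / r`. Along the squares
`∑ₖ E (S_{k²} / k²)² ≤ ∑ₖ 1 / (r k²) < ∞`, hence `S_{k²} / k² → 0` almost surely; since the steps
are bounded by `1`, between `m²` and `(m + 1)²` the walk moves by at most `2 m`, which is `o(m²)`.
-/

theorem abs_sub_le_of_abs_succ_sub_le {u : ℕ → ℝ} (hu : ∀ n, |u (n + 1) - u n| ≤ 1)
    {a b : ℕ} (hab : a ≤ b) : |u b - u a| ≤ (b - a : ℕ) :=
  calc |u b - u a| = dist (u a) (u b) := by rw [Real.dist_eq, abs_sub_comm]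
    _ ≤ ∑ i ∈ Finset.Ico a b, dist (u i) (u (i + 1)) := dist_le_Ico_sum_dist u hab
    _ ≤ ∑ _i ∈ Finset.Ico a b, (1 : ℝ) :=
        Finset.sum_le_sum fun i _ => by rw [Real.dist_eq, abs_sub_comm]; exact hu i
    _ = (b - a : ℕ) := by simp

theorem tendsto_div_of_tendsto_div_sq {u : ℕ → ℝ} (hu : ∀ n, |u (n + 1) - u n| ≤ 1)
    (h : Tendsto (fun k : ℕ => u (k ^ 2) / (k : ℝ) ^ 2) atTop (𝓝 0)) :
    Tendsto (fun n : ℕ => u n / n) atTop (𝓝 0) := by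
  have hsqrt : Tendsto Nat.sqrt atTop atTop :=
    tendsto_atTop_atTop.2 fun b => ⟨b ^ 2, fun n hn => Nat.le_sqrt'.2 hn⟩
  have hbound : ∀ n ≥ 1, |u n / n| ≤ |u (n.sqrt ^ 2) / (n.sqrt : ℝ) ^ 2| + 2 / n.sqrt := by
    intro n hn
    set m := n.sqrt
    have hm : 0 < m := Nat.sqrt_pos.2 hn
    have hmn : m ^ 2 ≤ n := Nat.sqrt_le' n
    have hgap : ((n - m ^ 2 : ℕ) : ℝ) ≤ 2 * m := by
      have : n < m ^ 2 + 2 * m + 1 := by linarith [Nat.lt_succ_sqrt' n]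
      have : n - m ^ 2 ≤ 2 * m := by omega
      exact_mod_cast this
    have hmR : (0 : ℝ) < m := by exact_mod_cast hm
    have hmnR : (m : ℝ) ^ 2 ≤ n := by exact_mod_cast hmn
    calc |u n / n| = |u n| / n := by rw [abs_div, Nat.abs_cast]
      _ ≤ (|u (m ^ 2)| + 2 * m) / (m : ℝ) ^ 2 := by
          gcongr
          linarith [abs_sub_abs_le_abs_sub (u n) (u (m ^ 2)), abs_sub_le_of_abs_succ_sub_le hu hmn]
      _ = |u (m ^ 2) / (m : ℝ) ^ 2| + 2 / m := by
          rw [abs_div, abs_of_pos (by positivity : (0 : ℝ) < (m : ℝ) ^ 2)]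
          field_simp
  have hlim : Tendsto (fun n : ℕ => |u (n.sqrt ^ 2) / (n.sqrt : ℝ) ^ 2| + 2 / n.sqrt) atTop
      (𝓝 0) := by
    have := (h.abs.add (tendsto_const_div_atTop_nhds_zero_nat (2 : ℝ))).comp hsqrt
    rwa [abs_zero, add_zero] at this
  exact squeeze_zero_norm' (eventually_atTop.2 ⟨1, hbound⟩) hlim

theorem ae_tendsto_zero_of_summable_integral_sq {Ω : Type*} [MeasurableSpace Ω] {μ : Measure Ω}
    {Y : ℕ → Ω → ℝ} (hY : ∀ k, Integrable (fun ω => Y k ω ^ 2) μ)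
    (hsum : Summable fun k => ∫ ω, Y k ω ^ 2 ∂μ) :
    ∀ᵐ ω ∂μ, Tendsto (fun k => Y k ω) atTop (𝓝 0) := by
  have hL1 : ∀ k, eLpNorm (fun ω => Y k ω ^ 2) 1 μ = ENNReal.ofReal (∫ ω, Y k ω ^ 2 ∂μ) := by
    intro k
    rw [eLpNorm_one_eq_lintegral_enorm, ← ofReal_integral_norm_eq_lintegral_enorm (hY k)]
    simp only [Real.norm_eq_abs, abs_pow, sq_abs]
  have hfin : ∑' k, eLpNorm (fun ω => Y k ω ^ 2) 1 μ ≠ ⊤ := by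
    simp_rw [hL1, ← ENNReal.ofReal_tsum_of_nonneg (fun k => integral_nonneg fun ω => sq_nonneg _)
      hsum]
    exact ENNReal.ofReal_ne_top
  filter_upwards [summable_norm_of_tsum_eLpNorm_ne_top le_rfl (fun k => (hY k).1) hfin]
    with ω hω
  simp only [Real.norm_eq_abs, abs_pow, sq_abs] at hω
  have hsqrt := (Real.continuous_sqrt.tendsto 0).comp hω.tendsto_atTop_zero
  rw [Real.sqrt_zero] at hsqrt
  refine (tendsto_zero_iff_abs_tendsto_zero _).2 ?_
  simpa only [Function.comp_def, Real.sqrt_sq_eq_abs] using hsqrt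

theorem ae_tendsto_div_of_integral_sq_le {Ω : Type*} [MeasurableSpace Ω] {μ : Measure Ω}
    {f : ℕ → Ω → ℝ} {C : ℝ} (hinc : ∀ n ω, |f (n + 1) ω - f n ω| ≤ 1)
    (hint : ∀ n, Integrable (fun ω => f n ω ^ 2) μ) (hmom : ∀ n, ∫ ω, f n ω ^ 2 ∂μ ≤ C * n) :
    ∀ᵐ ω ∂μ, Tendsto (fun n : ℕ => f n ω / n) atTop (𝓝 0) := by
  set Y : ℕ → Ω → ℝ := fun k ω => f (k ^ 2) ω / (k : ℝ) ^ 2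
  have hY : ∀ k, Integrable (fun ω => Y k ω ^ 2) μ := fun k => by
    simpa only [Y, div_pow] using (hint (k ^ 2)).div_const (((k : ℝ) ^ 2) ^ 2)
  have hYmom : ∀ k, ∫ ω, Y k ω ^ 2 ∂μ ≤ C * (1 / (k : ℝ) ^ 2) := fun k => by
    rcases Nat.eq_zero_or_pos k with rfl | hk
    · simp [Y]
    simp only [Y, div_pow, integral_div]
    calc (∫ ω, f (k ^ 2) ω ^ 2 ∂μ) / ((k : ℝ) ^ 2) ^ 2 ≤ C * (k ^ 2 : ℕ) / ((k : ℝ) ^ 2) ^ 2 := by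
          gcongr; exact hmom _
      _ = C * (1 / (k : ℝ) ^ 2) := by field_simp; push_cast; ring
  have hsum : Summable fun k => ∫ ω, Y k ω ^ 2 ∂μ :=
    Summable.of_nonneg_of_le (fun k => integral_nonneg fun ω => sq_nonneg _) hYmom
      ((Real.summable_one_div_nat_pow.2 one_lt_two).mul_left C)
  filter_upwards [ae_tendsto_zero_of_summable_integral_sq hY hsum] with ω hω
  exact tendsto_div_of_tendsto_div_sq (fun n => hinc n ω) hω

namespace ERWS

variable {Ω : Type*} [m0 : MeasurableSpace Ω] {μ : Measure Ω} {p q s : ℝ} (e : ERWS μ p q s)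

theorem abs_X_le_one {n : ℕ} (hn : 1 ≤ n) (ω : Ω) : |e.X n ω| ≤ 1 := by
  rcases e.val_mem n hn ω with h | h | h <;> simp [h]

theorem S_zero : e.S 0 = 0 := by
  funext ω; simp [S]

theorem S_succ (n : ℕ) (ω : Ω) : e.S (n + 1) ω = e.S n ω + e.X (n + 1) ω := by
  simp only [S]; rw [Finset.sum_Icc_succ_top (by omega)]

theorem abs_S_succ_sub_S_le (n : ℕ) (ω : Ω) : |e.S (n + 1) ω - e.S n ω| ≤ 1 := by
  rw [S_succ, add_sub_cancel_left]
  exact e.abs_X_le_one (by omega) ω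

theorem abs_S_le (n : ℕ) (ω : Ω) : |e.S n ω| ≤ n := by
  induction n with
  | zero => simp [S_zero]
  | succ n ih =>
    push_cast
    linarith [abs_sub_abs_le_abs_sub (e.S (n + 1) ω) (e.S n ω), e.abs_S_succ_sub_S_le n ω]

theorem stronglyMeasurable_X {n : ℕ} (hn : 1 ≤ n) : StronglyMeasurable (e.X n) :=
  (e.adapted n hn).mono (e.F.le n)

theorem stronglyMeasurable_S_filtration (n : ℕ) : StronglyMeasurable[e.F n] (e.S n) :=
  Finset.stronglyMeasurable_fun_sum _ fun k hk =>
    (e.adapted k (Finset.mem_Icc.1 hk).1).mono (e.F.mono (Finset.mem_Icc.1 hk).2)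

theorem stronglyMeasurable_S (n : ℕ) : StronglyMeasurable (e.S n) :=
  (e.stronglyMeasurable_S_filtration n).mono (e.F.le n)

section FiniteMeasure

variable [IsFiniteMeasure μ]

theorem integrable_X {n : ℕ} (hn : 1 ≤ n) : Integrable (e.X n) μ :=
  .of_bound (e.stronglyMeasurable_X hn).aestronglyMeasurable 1
    (ae_of_all _ fun ω => e.abs_X_le_one hn ω)

theorem integrable_X_sq {n : ℕ} (hn : 1 ≤ n) : Integrable (fun ω => e.X n ω ^ 2) μ :=
  .of_bound ((e.stronglyMeasurable_X hn).pow 2).aestronglyMeasurable 1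
    (ae_of_all _ fun ω => by simpa [abs_pow] using e.abs_X_le_one hn ω)

theorem integrable_S_sq (n : ℕ) : Integrable (fun ω => e.S n ω ^ 2) μ :=
  .of_bound ((e.stronglyMeasurable_S n).pow 2).aestronglyMeasurable ((n : ℝ) ^ 2)
    (ae_of_all _ fun ω => by
      simpa [abs_pow] using pow_le_pow_left₀ (abs_nonneg _) (e.abs_S_le n ω) 2)

theorem integrable_S_mul_X_succ (n : ℕ) : Integrable (e.S n * e.X (n + 1)) μ :=
  .of_bound
    ((e.stronglyMeasurable_S n).mul (e.stronglyMeasurable_X (by omega))).aestronglyMeasurable n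
    (ae_of_all _ fun ω => by
      simpa [abs_mul] using mul_le_mul (e.abs_S_le n ω) (e.abs_X_le_one (by omega) ω)
        (abs_nonneg _) (Nat.cast_nonneg n))

theorem integral_S_mul_X_succ (n : ℕ) :
    ∫ ω, e.S n ω * e.X (n + 1) ω ∂μ = (p - q) / n * ∫ ω, e.S n ω ^ 2 ∂μ := by
  rcases Nat.eq_zero_or_pos n with rfl | hn
  · simp [S_zero]
  have hpull := condExp_mul_of_stronglyMeasurable_left (m := e.F n)
    (e.stronglyMeasurable_S_filtration n) (e.integrable_S_mul_X_succ n) (e.integrable_X (by omega))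
  calc ∫ ω, e.S n ω * e.X (n + 1) ω ∂μ = ∫ ω, (μ[e.S n * e.X (n + 1)|e.F n]) ω ∂μ :=
        (integral_condExp (e.F.le n)).symm
    _ = ∫ ω, (p - q) / n * e.S n ω ^ 2 ∂μ := by
        refine integral_congr_ae (hpull.trans ?_)
        filter_upwards [e.cond_one n hn] with ω hω
        simp only [Pi.mul_apply, hω, S]
        ring
    _ = (p - q) / n * ∫ ω, e.S n ω ^ 2 ∂μ := integral_const_mul _ _

theorem integral_S_succ_sq (n : ℕ) :
    ∫ ω, e.S (n + 1) ω ^ 2 ∂μ =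
      (1 + 2 * (p - q) / n) * ∫ ω, e.S n ω ^ 2 ∂μ + ∫ ω, e.X (n + 1) ω ^ 2 ∂μ := by
  have hexpand : (fun ω => e.S (n + 1) ω ^ 2) =
      fun ω => (e.S n ω ^ 2 + 2 * (e.S n ω * e.X (n + 1) ω)) + e.X (n + 1) ω ^ 2 := by
    funext ω; rw [S_succ]; ring
  have hcross : Integrable (fun ω => 2 * (e.S n ω * e.X (n + 1) ω)) μ :=
    (e.integrable_S_mul_X_succ n).const_mul 2
  rw [hexpand, integral_add ((e.integrable_S_sq n).fun_add hcross) (e.integrable_X_sq (by omega)),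
    integral_add (e.integrable_S_sq n) hcross, integral_const_mul, e.integral_S_mul_X_succ n]
  ring

end FiniteMeasure

variable [IsProbabilityMeasure μ]

theorem integral_X_sq_le_one {n : ℕ} (hn : 1 ≤ n) : ∫ ω, e.X n ω ^ 2 ∂μ ≤ 1 := by
  have := integral_mono (e.integrable_X_sq hn) (integrable_const 1) fun ω =>
    (sq_le_one_iff_abs_le_one _).2 (e.abs_X_le_one hn ω)
  simpa using this

theorem integral_S_sq_le (h0 : 0 ≤ p - q) (h1 : 2 * (p - q) < 1) (n : ℕ) :
    ∫ ω, e.S n ω ^ 2 ∂μ ≤ n / (1 - 2 * (p - q)) := by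
  set a := 2 * (p - q)
  have ha0 : 0 ≤ a := by positivity
  have ha : 0 < 1 - a := by linarith
  induction n with
  | zero => simp [S_zero]
  | succ n ih =>
    have hcoef : (1 + a / n) * (n / (1 - a)) ≤ (n + a) / (1 - a) := by
      rcases Nat.eq_zero_or_pos n with rfl | hn
      · simp only [CharP.cast_eq_zero, zero_div, mul_zero, zero_add]
        positivity
      · exact (by field_simp : (1 + a / n) * (n / (1 - a)) = (n + a) / (1 - a)).le
    rw [e.integral_S_succ_sq n]
    calc (1 + a / n) * ∫ ω, e.S n ω ^ 2 ∂μ + ∫ ω, e.X (n + 1) ω ^ 2 ∂μ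
        ≤ (1 + a / n) * (n / (1 - a)) + 1 :=
          add_le_add (mul_le_mul_of_nonneg_left ih (by positivity))
            (e.integral_X_sq_le_one (by omega))
      _ ≤ (n + a) / (1 - a) + 1 := by gcongr
      _ = ((n + 1 : ℕ) : ℝ) / (1 - a) := by field_simp; push_cast; ring

theorem ae_tendsto_S_div (h0 : 0 ≤ p - q) (h1 : 2 * (p - q) < 1) :
    ∀ᵐ ω ∂μ, Tendsto (fun n : ℕ => e.S n ω / n) atTop (𝓝 0) :=
  ae_tendsto_div_of_integral_sq_le (C := 1 / (1 - 2 * (p - q))) e.abs_S_succ_sub_S_le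
    e.integrable_S_sq fun n => (e.integral_S_sq_le h0 h1 n).trans_eq (by ring)

end ERWS

theorem erws_critical_as_convergence_general
    {Ω : Type*} [m0 : MeasurableSpace Ω] {μ : Measure Ω} [IsProbabilityMeasure μ]
    {p q r s : ℝ} (hr0 : 0 < r) (hr1 : r < 1)
    (hpqr : p + q + r = 1)
    (hcrit : p / (1 - r) = 3 / 4)
    (e : ERWS μ p q s) :
    ∀ᵐ ω ∂μ, Tendsto (fun n : ℕ => e.S n ω / n) atTop (𝓝 0) := by
  rw [div_eq_iff (by linarith)] at hcrit
  exact e.ae_tendsto_S_div (by linarith) (by linarith)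

/-- in the critical regime `p/(1-r) = 3/4`, `S_n / n → 0` almost surely. -/
theorem erws_critical_as_convergence
    {Ω : Type*} [m0 : MeasurableSpace Ω] {μ : Measure Ω} [IsProbabilityMeasure μ]
    {p q r s : ℝ} (hp : 0 ≤ p) (hq : 0 ≤ q) (hr0 : 0 < r) (hr1 : r < 1)
    (hpqr : p + q + r = 1) (hs0 : 0 ≤ s) (hs1 : s ≤ 1)
    (hcrit : p / (1 - r) = 3 / 4)
    (e : ERWS μ p q s) :
    ∀ᵐ ω ∂μ, Tendsto (fun n : ℕ => e.S n ω / n) atTop (𝓝 0) :=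
  erws_critical_as_convergence_general (m0 := m0) hr0 hr1 hpqr hcrit e
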